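/- Let P := (1/2)·J_𝓗(I + R_G)J_𝓗 as above and M_G := (I + A_G D_G^{-1})/2. If x is an eigenvector of P with nonzero eigenvalue η, then x is constant on each block {(v,j) : 1 ≤ j ≤ deg_G(v)}, and the vector y defined by y_v = x_{(v,j)} is an eigenvector of M_G with eigenvalue η. Conversely, every eigenvector of M_G with eigenvalue η lifts (by constant extension on blocks) to an eigenvector of P with eigenvalue η. Hence the nonzero eigenvalues of P coincide with the nonzero eigenvalues of M_G (with correspondence). -/

import Mathlib

open Finset

/-- Vertices of the non-uniform replacement product: a cloud `Fin (deg u)` per vertex `u`. -/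
abbrev RPVert {V : Type*} [Fintype V] (G : SimpleGraph V) [DecidableRel G.Adj] :=
  Σ u : V, Fin (G.degree u)

/-!
`P` is the matrix `Q := W_G D_G⁻¹` pulled back along the projection `(v, j) ↦ v`, so `x P` only
depends on the block sums of `x` and is constant on blocks; for `η ≠ 0` the eigenvector equation
`x P = η x` therefore forces `x` to be block-constant. For `x` lifted from `y`, the block sums are
`D_G y`, and `M_G = D_G W_G D_G⁻¹` gives `y M_G = (D_G y) Q`, so both eigenvalue equations become
the same equation `(D_G y) Q = η y`.
-/

section Blocks

variable {ι : Type*} {κ : ι → Type*} [∀ i, Fintype (κ i)]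

def blockSum {R : Type*} [AddCommMonoid R] (x : (Σ i, κ i) → R) (i : ι) : R :=
  ∑ k, x ⟨i, k⟩

theorem blockSum_comp_fst {R : Type*} [AddCommMonoid R] (y : ι → R) :
    blockSum (fun a : Σ i, κ i => y a.1) = fun i => Fintype.card (κ i) • y i := by
  ext i
  simp [blockSum]

end Blocks

namespace Matrix

section Blocks

variable {ι : Type*} {κ : ι → Type*} [Fintype ι] [∀ i, Fintype (κ i)]

theorem vecMul_submatrix_fst {R n m : Type*} [NonUnitalNonAssocSemiring R]
    (x : (Σ i, κ i) → R) (Q : Matrix ι n R) (g : m → n) :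
    x ᵥ* Q.submatrix Sigma.fst g = fun b => (blockSum x ᵥ* Q) (g b) := by
  ext b
  simp only [vecMul, dotProduct, submatrix_apply, blockSum, sum_mul]
  rw [← univ_sigma_univ, sum_sigma]

variable {K : Type*} [Field K]

theorem apply_eq_of_vecMul_submatrix_fst_eq_smul {x : (Σ i, κ i) → K} {Q : Matrix ι ι K}
    {η : K} (hη : η ≠ 0) (hx : x ᵥ* Q.submatrix Sigma.fst Sigma.fst = η • x)
    {a b : Σ i, κ i} (hab : a.1 = b.1) : x a = x b := by
  have hx_eq : ∀ c, x c = η⁻¹ * (blockSum x ᵥ* Q) c.1 := fun c => by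
    rw [vecMul_submatrix_fst] at hx
    rw [congrFun hx c, Pi.smul_apply, smul_eq_mul, inv_mul_cancel_left₀ hη]
  rw [hx_eq a, hx_eq b, hab]

theorem vecMul_submatrix_fst_comp_fst_eq_smul_iff [∀ i, Nonempty (κ i)] {y : ι → K}
    {Q : Matrix ι ι K} {η : K} :
    (fun a : Σ i, κ i => y a.1) ᵥ* Q.submatrix Sigma.fst Sigma.fst =
        η • (fun a : Σ i, κ i => y a.1) ↔
      (fun i => Fintype.card (κ i) • y i) ᵥ* Q = η • y := by
  rw [vecMul_submatrix_fst, blockSum_comp_fst]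
  constructor
  · intro h
    ext i
    obtain ⟨k⟩ := ‹∀ i, Nonempty (κ i)› i
    exact congrFun h ⟨i, k⟩
  · intro h
    ext a
    exact congrFun h a.1

end Blocks

section Diagonal

variable {n K : Type*} [Fintype n] [DecidableEq n] [Field K] {d : n → K}

theorem diagonal_mul_one_add_diagonal_inv_mul_mul_diagonal_inv (hd : ∀ i, d i ≠ 0)
    (A : Matrix n n K) :
    diagonal d * (1 + diagonal (fun i => (d i)⁻¹) * A) * diagonal (fun i => (d i)⁻¹) =
      1 + A * diagonal (fun i => (d i)⁻¹) := by
  have hdd : diagonal d * diagonal (fun i => (d i)⁻¹) = 1 := by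
    rw [diagonal_mul_diagonal, ← diagonal_one]
    exact congrArg diagonal (funext fun i => mul_inv_cancel₀ (hd i))
  rw [Matrix.mul_add, Matrix.mul_one, ← Matrix.mul_assoc, hdd, Matrix.one_mul, Matrix.add_mul,
    hdd]

theorem vecMul_smul_one_add_mul_diagonal_inv (hd : ∀ i, d i ≠ 0) (c : K) (A : Matrix n n K)
    (y : n → K) :
    y ᵥ* (c • (1 + A * diagonal (fun i => (d i)⁻¹))) =
      (fun i => d i * y i) ᵥ* (c • (1 + diagonal (fun i => (d i)⁻¹) * A) *
        diagonal (fun i => (d i)⁻¹)) := by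
  rw [← diagonal_mul_one_add_diagonal_inv_mul_mul_diagonal_inv hd, Matrix.smul_mul,
    Matrix.mul_assoc, ← Matrix.mul_smul, ← vecMul_vecMul]
  congr 1
  ext i
  rw [vecMul_diagonal, mul_comm]

end Diagonal

end Matrix

open Matrix

/-- Let `P` be the matrix on the rotation-map vertices with
`P_{(u,i),(v,j)} = W_G(u,v)/deg_G(v)` and `M_G := (I + A_G D_G⁻¹)/2`.  If `x` is a
(row) eigenvector of `P` with nonzero eigenvalue `η`, then `x` is constant on each
block `{(v,j) : j < deg v}`, and the induced vector `y` (with `y_v = x_{(v,j)}`) is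
an eigenvector of `M_G` with eigenvalue `η`.  Conversely, every eigenvector of `M_G`
with eigenvalue `η` lifts, by constant extension on blocks, to an eigenvector of `P`
with eigenvalue `η` (nonzero if `y` is nonzero).  Hence the nonzero eigenvalues of
`P` and of `M_G` coincide. -/
theorem P_M_eigenvector_correspondence
    {V : Type*} [Fintype V] [DecidableEq V]
    (G : SimpleGraph V) [DecidableRel G.Adj]
    (hdeg : ∀ v : V, 0 < G.degree v)
    (WG M : Matrix V V ℝ)
    (hWG : WG = Matrix.of fun u v =>
      (2 : ℝ)⁻¹ * ((if u = v then (1 : ℝ) else 0)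
        + (if G.Adj u v then (1 : ℝ) else 0) / (G.degree u : ℝ)))
    (hM : M = (2 : ℝ)⁻¹ •
      ((1 : Matrix V V ℝ) +
        G.adjMatrix ℝ * Matrix.diagonal fun v => ((G.degree v : ℝ))⁻¹))
    (P : Matrix (RPVert G) (RPVert G) ℝ)
    (hP : P = Matrix.of fun x y => WG x.1 y.1 / (G.degree y.1 : ℝ)) :
    (∀ (x : RPVert G → ℝ) (η : ℝ), η ≠ 0 → Matrix.vecMul x P = η • x →
      (∀ (v : V) (j j' : Fin (G.degree v)), x ⟨v, j⟩ = x ⟨v, j'⟩) ∧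
      Matrix.vecMul (fun v => x ⟨v, ⟨0, hdeg v⟩⟩) M
        = η • fun v => x ⟨v, ⟨0, hdeg v⟩⟩) ∧
    (∀ (y : V → ℝ) (η : ℝ), Matrix.vecMul y M = η • y →
      (Matrix.vecMul (fun x : RPVert G => y x.1) P = η • fun x : RPVert G => y x.1) ∧
      (y ≠ 0 → (fun x : RPVert G => y x.1) ≠ 0)) := by
  subst hWG hM hP
  set Dinv : Matrix V V ℝ := diagonal fun v => ((G.degree v : ℝ))⁻¹
  set Q := (2 : ℝ)⁻¹ • (1 + Dinv * G.adjMatrix ℝ) * Dinv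
  have hP : (of fun a b : RPVert G => (of fun u v => (2 : ℝ)⁻¹ * ((if u = v then (1 : ℝ) else 0)
      + (if G.Adj u v then (1 : ℝ) else 0) / (G.degree u : ℝ))) a.1 b.1 /
        (G.degree b.1 : ℝ)) = Q.submatrix Sigma.fst Sigma.fst := by
    ext a b
    simp only [Q, Dinv, of_apply, submatrix_apply, mul_diagonal, Matrix.smul_apply,
      Matrix.add_apply, one_apply, diagonal_mul, SimpleGraph.adjMatrix_apply, smul_eq_mul,
      mul_ite, mul_one, mul_zero, div_eq_mul_inv, ite_mul, one_mul, zero_mul]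
  have : ∀ v, Nonempty (Fin (G.degree v)) := fun v => ⟨⟨0, hdeg v⟩⟩
  have hlift : ∀ (y : V → ℝ) (η : ℝ), y ᵥ* ((2 : ℝ)⁻¹ • (1 + G.adjMatrix ℝ * Dinv)) = η • y ↔
      (fun a : RPVert G => y a.1) ᵥ* Q.submatrix Sigma.fst Sigma.fst =
        η • fun a : RPVert G => y a.1 := fun y η => by
    rw [vecMul_submatrix_fst_comp_fst_eq_smul_iff, vecMul_smul_one_add_mul_diagonal_inv
      (fun v => Nat.cast_ne_zero.2 (hdeg v).ne')]
    simp only [Fintype.card_fin, nsmul_eq_mul, Q, Dinv]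
  rw [hP]
  refine ⟨fun x η hη hx => ?_, fun y η hy => ⟨(hlift y η).1 hy, fun hy0 hx0 => hy0 ?_⟩⟩
  · have hconst : ∀ (v : V) (j j' : Fin (G.degree v)), x ⟨v, j⟩ = x ⟨v, j'⟩ :=
      fun v j j' => apply_eq_of_vecMul_submatrix_fst_eq_smul hη hx rfl
    have hx_lift : (fun a : RPVert G => x ⟨a.1, ⟨0, hdeg a.1⟩⟩) = x :=
      funext fun a => hconst a.1 _ a.2
    refine ⟨hconst, (hlift _ η).2 ?_⟩
    rwa [hx_lift]
  · exact funext fun v => congrFun hx0 ⟨v, ⟨0, hdeg v⟩⟩
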